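/- Let d ≥ 2, and equip X := ℝ^{d−1} × ℤ with the product of Lebesgue measure and counting measure. Let G : X × X → ℂ be a locally integrable measurable function that can be decomposed as a finite sum G = Σ_{j=1}^K G_j such that for each j either sup_{(ξ,k)∈X} ∫_X |G_j(ξ,k,η,l)|² d(η,l) ≤ C² or sup_{(η,l)∈X} ∫_X |G_j(ξ,k,η,l)|² d(ξ,k) ≤ C², for some constant C. Then for all f, g ∈ L²(X), the function h(ξ,k) := ∫_X G(ξ,k,η,l) f(ξ−η, k−l) g(η,l) d(η,l) belongs to L²(X), the induced map (f,g) ↦ h is a continuous bilinear map L² × L² → L², and ‖h‖_{L²(X)} ≤ K·C·‖f‖_{L²(X)} ‖g‖_{L²(X)}. -/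

import Mathlib

/-!
Everything is estimated through the nonnegative majorant
`T_A(u, v)(p) = ∫⁻ A(p,q) u(p-q) v(q) dq` with `A = |G_j|`, `u = |f|`, `v = |g|`, so the
Bochner integrals never need to be integrable. If the rows of `A` are bounded in `L²`,
Cauchy–Schwarz in `q` gives `T(p)² ≤ c² ∫ u(p-q)² v(q)² dq`, and Tonelli with translation
invariance integrates this to `c² ‖u‖² ‖v‖²`. If the columns are bounded, pair `A(p,q) v(q)`
with `u(p-q)` instead: the second factor is `‖u‖²` by invariance under `q ↦ p - q`, and
Tonelli sums the column bounds against `v²`. The full kernel is dominated by `∑ⱼ |G_j|`, and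
Minkowski's inequality in `L²` contributes the factor `K`.
-/

open MeasureTheory ENNReal NNReal

noncomputable section

/-- The frequency domain `X = ℝ^{d−1} × ℤ`. -/
abbrev Freq (d : ℕ) := (Fin (d - 1) → ℝ) × ℤ

/-- The measure on `X = ℝ^{d−1} × ℤ`: Lebesgue measure times counting measure. -/
def freqMeasure (d : ℕ) : Measure (Freq d) :=
  (volume : Measure (Fin (d - 1) → ℝ)).prod (Measure.count : Measure ℤ)

namespace MeasureTheory.Measure

instance prod.instIsNegInvariant {α β : Type*} [MeasurableSpace α] [MeasurableSpace β]
    [Neg α] [Neg β] [MeasurableNeg α] [MeasurableNeg β] (μ : Measure α) (ν : Measure β)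
    [SFinite μ] [SFinite ν] [μ.IsNegInvariant] [ν.IsNegInvariant] :
    (μ.prod ν).IsNegInvariant where
  neg_eq_self := by
    change map (Prod.map Neg.neg Neg.neg) (μ.prod ν) = μ.prod ν
    rw [← map_prod_map _ _ measurable_neg measurable_neg, map_neg_eq_self, map_neg_eq_self]

end MeasureTheory.Measure

instance (d : ℕ) : SigmaFinite (freqMeasure d) := by unfold freqMeasure; infer_instance

instance (d : ℕ) : (freqMeasure d).IsAddLeftInvariant := by unfold freqMeasure; infer_instance

instance (d : ℕ) : (freqMeasure d).IsNegInvariant := by unfold freqMeasure; infer_instance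

theorem ENNReal.sq_lintegral_mul_le {α : Type*} [MeasurableSpace α] (μ : Measure α)
    {f g : α → ℝ≥0∞} (hf : AEMeasurable f μ) (hg : AEMeasurable g μ) :
    (∫⁻ a, f a * g a ∂μ) ^ 2 ≤ (∫⁻ a, f a ^ 2 ∂μ) * ∫⁻ a, g a ^ 2 ∂μ := by
  have h := ENNReal.lintegral_mul_le_Lp_mul_Lq μ Real.HolderConjugate.two_two hf hg
  simp only [ENNReal.rpow_two, Pi.mul_apply] at h
  calc (∫⁻ a, f a * g a ∂μ) ^ 2
      ≤ ((∫⁻ a, f a ^ 2 ∂μ) ^ (1 / 2 : ℝ) * (∫⁻ a, g a ^ 2 ∂μ) ^ (1 / 2 : ℝ)) ^ 2 := by gcongr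
    _ = (∫⁻ a, f a ^ 2 ∂μ) * ∫⁻ a, g a ^ 2 ∂μ := by
      rw [mul_pow, ← ENNReal.rpow_two, ← ENNReal.rpow_two, ← ENNReal.rpow_mul,
        ← ENNReal.rpow_mul]
      norm_num

theorem sq_eLpNorm_two {α ε : Type*} [MeasurableSpace α] [ENorm ε] (μ : Measure α)
    (f : α → ε) : eLpNorm f 2 μ ^ 2 = ∫⁻ a, ‖f a‖ₑ ^ 2 ∂μ := by
  simpa using eLpNorm_nnreal_pow_eq_lintegral (μ := μ) (f := f) (p := 2) two_ne_zero

section KernelConv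

variable {α : Type*} [MeasurableSpace α] [AddCommGroup α] {μ : Measure α}
  {A : α × α → ℝ≥0∞} {F G : α → ℝ≥0∞} {c : ℝ≥0∞}
  {𝕜 : Type*} [NormedDivisionRing 𝕜] [NormedSpace ℝ 𝕜] {K : α × α → 𝕜} {f g : α → 𝕜}

def lkernelConv (μ : Measure α) (A : α × α → ℝ≥0∞) (F G : α → ℝ≥0∞) (p : α) : ℝ≥0∞ :=
  ∫⁻ q, A (p, q) * F (p - q) * G q ∂μ

def kernelConv (μ : Measure α) (K : α × α → 𝕜) (f g : α → 𝕜) (p : α) : 𝕜 :=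
  ∫ q, K (p, q) * f (p - q) * g q ∂μ

theorem lkernelConv_mono_left {B : α × α → ℝ≥0∞} (hAB : A ≤ B) :
    lkernelConv μ A F G ≤ lkernelConv μ B F G :=
  fun p => lintegral_mono fun q => by gcongr; exact hAB _

theorem enorm_kernelConv_le (p : α) :
    ‖kernelConv μ K f g p‖ₑ ≤ lkernelConv μ (‖K ·‖ₑ) (‖f ·‖ₑ) (‖g ·‖ₑ) p :=
  (enorm_integral_le_lintegral_enorm _).trans_eq (by simp only [lkernelConv, enorm_mul])

variable [MeasurableAdd₂ α] [μ.IsAddLeftInvariant]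

section AEMeasurable

variable {β : Type*} [MeasurableSpace β] {φ : α → β}

theorem AEMeasurable.comp_sub_right (hφ : AEMeasurable φ μ) (q : α) :
    AEMeasurable (fun p => φ (p - q)) μ :=
  hφ.comp_quasiMeasurePreserving (measurePreserving_sub_right μ q).quasiMeasurePreserving

variable [MeasurableNeg α] [SigmaFinite μ]

theorem AEMeasurable.comp_sub_left (hφ : AEMeasurable φ μ) (p : α) :
    AEMeasurable (fun q => φ (p - q)) μ :=
  hφ.comp_quasiMeasurePreserving (quasiMeasurePreserving_sub_left μ p)

theorem AEMeasurable.comp_sub_prod (hφ : AEMeasurable φ μ) :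
    AEMeasurable (fun z : α × α => φ (z.1 - z.2)) (μ.prod μ) :=
  hφ.comp_quasiMeasurePreserving (quasiMeasurePreserving_sub μ μ)

end AEMeasurable

variable [MeasurableNeg α] [SigmaFinite μ]

theorem aemeasurable_lkernelConv (hA : Measurable A) (hF : AEMeasurable F μ)
    (hG : AEMeasurable G μ) : AEMeasurable (lkernelConv μ A F G) μ :=
  ((hA.aemeasurable.mul hF.comp_sub_prod).mul hG.comp_snd).lintegral_prod_right'

theorem MeasureTheory.AEStronglyMeasurable.kernelConv (hK : AEStronglyMeasurable K (μ.prod μ))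
    (hf : AEStronglyMeasurable f μ) (hg : AEStronglyMeasurable g μ) :
    AEStronglyMeasurable (kernelConv μ K f g) μ :=
  ((hK.mul (hf.comp_quasiMeasurePreserving (quasiMeasurePreserving_sub μ μ))).mul
    hg.comp_snd).integral_prod_right'

theorem lkernelConv_finsetSum {ι : Type*} (s : Finset ι) {A : ι → α × α → ℝ≥0∞}
    (hA : ∀ j, Measurable (A j)) (hF : AEMeasurable F μ) (hG : AEMeasurable G μ) :
    lkernelConv μ (fun z => ∑ j ∈ s, A j z) F G = ∑ j ∈ s, lkernelConv μ (A j) F G := by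
  ext p
  simp only [lkernelConv, Finset.sum_mul, Finset.sum_apply]
  exact lintegral_finsetSum' s fun j _ =>
    (((hA j).comp measurable_prodMk_left).aemeasurable.mul (hF.comp_sub_left p)).mul hG

theorem lintegral_lintegral_sub_mul (hF : AEMeasurable F μ) (hG : AEMeasurable G μ) :
    ∫⁻ p, ∫⁻ q, F (p - q) * G q ∂μ ∂μ = (∫⁻ p, F p ∂μ) * ∫⁻ q, G q ∂μ := by
  rw [lintegral_lintegral_swap (hF.comp_sub_prod.mul hG.comp_snd)]
  calc ∫⁻ q, ∫⁻ p, F (p - q) * G q ∂μ ∂μ = ∫⁻ q, (∫⁻ p, F (p - q) ∂μ) * G q ∂μ :=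
        lintegral_congr fun q => lintegral_mul_const'' _ (hF.comp_sub_right q)
    _ = (∫⁻ p, F p ∂μ) * ∫⁻ q, G q ∂μ := by
        simp_rw [lintegral_sub_right_eq_self]
        exact lintegral_const_mul'' _ hG

theorem lintegral_sq_lkernelConv_le_of_row (hA : Measurable A) (hF : AEMeasurable F μ)
    (hG : AEMeasurable G μ) (hrow : ∀ p, ∫⁻ q, A (p, q) ^ 2 ∂μ ≤ c) :
    ∫⁻ p, lkernelConv μ A F G p ^ 2 ∂μ ≤ c * ((∫⁻ p, F p ^ 2 ∂μ) * ∫⁻ q, G q ^ 2 ∂μ) := by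
  have hF2 := hF.pow_const 2
  have hG2 := hG.pow_const 2
  have hpoint (p : α) : lkernelConv μ A F G p ^ 2 ≤ c * ∫⁻ q, F (p - q) ^ 2 * G q ^ 2 ∂μ :=
    calc lkernelConv μ A F G p ^ 2 = (∫⁻ q, A (p, q) * (F (p - q) * G q) ∂μ) ^ 2 := by
          simp only [lkernelConv, mul_assoc]
      _ ≤ (∫⁻ q, A (p, q) ^ 2 ∂μ) * ∫⁻ q, (F (p - q) * G q) ^ 2 ∂μ :=
          ENNReal.sq_lintegral_mul_le μ (hA.comp measurable_prodMk_left).aemeasurable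
            ((hF.comp_sub_left p).mul hG)
      _ ≤ c * ∫⁻ q, F (p - q) ^ 2 * G q ^ 2 ∂μ := by
          simp_rw [mul_pow]
          gcongr
          exact hrow p
  calc ∫⁻ p, lkernelConv μ A F G p ^ 2 ∂μ
      ≤ ∫⁻ p, c * ∫⁻ q, F (p - q) ^ 2 * G q ^ 2 ∂μ ∂μ := lintegral_mono hpoint
    _ = c * ∫⁻ p, ∫⁻ q, F (p - q) ^ 2 * G q ^ 2 ∂μ ∂μ :=
        lintegral_const_mul'' _ (hF2.comp_sub_prod.mul hG2.comp_snd).lintegral_prod_right'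
    _ = c * ((∫⁻ p, F p ^ 2 ∂μ) * ∫⁻ q, G q ^ 2 ∂μ) := by
        rw [lintegral_lintegral_sub_mul hF2 hG2]

variable [μ.IsNegInvariant]

theorem lintegral_sq_lkernelConv_le_of_col (hA : Measurable A) (hF : AEMeasurable F μ)
    (hG : AEMeasurable G μ) (hcol : ∀ q, ∫⁻ p, A (p, q) ^ 2 ∂μ ≤ c) :
    ∫⁻ p, lkernelConv μ A F G p ^ 2 ∂μ ≤ c * ((∫⁻ p, F p ^ 2 ∂μ) * ∫⁻ q, G q ^ 2 ∂μ) := by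
  have hAG : AEMeasurable (fun z : α × α => A z ^ 2 * G z.2 ^ 2) (μ.prod μ) :=
    (hA.pow_const 2).aemeasurable.mul (hG.pow_const 2).comp_snd
  have hpoint (p : α) :
      lkernelConv μ A F G p ^ 2 ≤ (∫⁻ q, A (p, q) ^ 2 * G q ^ 2 ∂μ) * ∫⁻ q, F q ^ 2 ∂μ :=
    calc lkernelConv μ A F G p ^ 2 = (∫⁻ q, A (p, q) * G q * F (p - q) ∂μ) ^ 2 := by
          simp only [lkernelConv, mul_right_comm]
      _ ≤ (∫⁻ q, (A (p, q) * G q) ^ 2 ∂μ) * ∫⁻ q, F (p - q) ^ 2 ∂μ :=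
          ENNReal.sq_lintegral_mul_le μ
            ((hA.comp measurable_prodMk_left).aemeasurable.mul hG) (hF.comp_sub_left p)
      _ = (∫⁻ q, A (p, q) ^ 2 * G q ^ 2 ∂μ) * ∫⁻ q, F q ^ 2 ∂μ := by
          simp_rw [mul_pow, lintegral_sub_left_eq_self (fun q => F q ^ 2)]
  calc ∫⁻ p, lkernelConv μ A F G p ^ 2 ∂μ
      ≤ ∫⁻ p, (∫⁻ q, A (p, q) ^ 2 * G q ^ 2 ∂μ) * ∫⁻ q, F q ^ 2 ∂μ ∂μ := lintegral_mono hpoint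
    _ = (∫⁻ q, ∫⁻ p, A (p, q) ^ 2 * G q ^ 2 ∂μ ∂μ) * ∫⁻ q, F q ^ 2 ∂μ := by
        rw [lintegral_mul_const'' _ hAG.lintegral_prod_right', lintegral_lintegral_swap hAG]
    _ ≤ (∫⁻ q, c * G q ^ 2 ∂μ) * ∫⁻ q, F q ^ 2 ∂μ := by
        gcongr with q
        rw [lintegral_mul_const'' (f := fun p => A (p, q) ^ 2) _
          ((hA.comp measurable_prodMk_right).pow_const 2).aemeasurable]
        exact mul_le_mul_left (hcol q) _
    _ = c * ((∫⁻ p, F p ^ 2 ∂μ) * ∫⁻ q, G q ^ 2 ∂μ) := by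
        rw [lintegral_const_mul'' _ (hG.pow_const 2)]
        ring

theorem eLpNorm_lkernelConv_le (hA : Measurable A) (hF : AEMeasurable F μ)
    (hG : AEMeasurable G μ)
    (hschur : (∀ p, ∫⁻ q, A (p, q) ^ 2 ∂μ ≤ c ^ 2) ∨ ∀ q, ∫⁻ p, A (p, q) ^ 2 ∂μ ≤ c ^ 2) :
    eLpNorm (lkernelConv μ A F G) 2 μ ≤ c * eLpNorm F 2 μ * eLpNorm G 2 μ := by
  rw [← ENNReal.pow_le_pow_left_iff two_ne_zero, mul_pow, mul_pow, mul_assoc]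
  simp only [sq_eLpNorm_two, enorm_eq_self]
  rcases hschur with hrow | hcol
  · exact lintegral_sq_lkernelConv_le_of_row hA hF hG hrow
  · exact lintegral_sq_lkernelConv_le_of_col hA hF hG hcol

theorem eLpNorm_kernelConv_le [MeasurableSpace 𝕜] [OpensMeasurableSpace 𝕜]
    {ι : Type*} [Fintype ι] {Kj : ι → α × α → 𝕜}
    (hKj : ∀ j, Measurable (Kj j)) (hK : ∀ z, K z = ∑ j, Kj j z)
    (hschur : ∀ j, (∀ p, ∫⁻ q, ‖Kj j (p, q)‖ₑ ^ 2 ∂μ ≤ c ^ 2) ∨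
      ∀ q, ∫⁻ p, ‖Kj j (p, q)‖ₑ ^ 2 ∂μ ≤ c ^ 2)
    (hf : AEStronglyMeasurable f μ) (hg : AEStronglyMeasurable g μ) :
    eLpNorm (kernelConv μ K f g) 2 μ ≤
      Fintype.card ι * c * eLpNorm f 2 μ * eLpNorm g 2 μ := by
  have hA (j : ι) : Measurable (‖Kj j ·‖ₑ) := (hKj j).enorm
  have hK_le : (‖K ·‖ₑ) ≤ fun z => ∑ j, ‖Kj j z‖ₑ := fun z =>
    (congrArg _ (hK z)).trans_le (enorm_sum_le _ _)
  have hpoint (p : α) :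
      ‖kernelConv μ K f g p‖ₑ ≤ ‖(∑ j, lkernelConv μ (‖Kj j ·‖ₑ) (‖f ·‖ₑ) (‖g ·‖ₑ)) p‖ₑ := by
    rw [enorm_eq_self, ← lkernelConv_finsetSum _ hA hf.enorm hg.enorm]
    exact (enorm_kernelConv_le p).trans (lkernelConv_mono_left hK_le p)
  calc eLpNorm (kernelConv μ K f g) 2 μ
      ≤ eLpNorm (∑ j, lkernelConv μ (‖Kj j ·‖ₑ) (‖f ·‖ₑ) (‖g ·‖ₑ)) 2 μ :=
        eLpNorm_mono_enorm hpoint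
    _ ≤ ∑ j, eLpNorm (lkernelConv μ (‖Kj j ·‖ₑ) (‖f ·‖ₑ) (‖g ·‖ₑ)) 2 μ :=
        eLpNorm_sum_le (fun j _ =>
          (aemeasurable_lkernelConv (hA j) hf.enorm hg.enorm).aestronglyMeasurable) one_le_two
    _ ≤ ∑ _j : ι, c * eLpNorm f 2 μ * eLpNorm g 2 μ := by
        refine Finset.sum_le_sum fun j _ => ?_
        simpa only [eLpNorm_enorm] using
          eLpNorm_lkernelConv_le (hA j) hf.enorm hg.enorm (hschur j)
    _ = Fintype.card ι * c * eLpNorm f 2 μ * eLpNorm g 2 μ := by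
        simp only [Finset.sum_const, Finset.card_univ, nsmul_eq_mul, mul_assoc]

end KernelConv

theorem schur_bilinear_L2_general (d : ℕ) (K : ℕ) (C : ℝ) (hC : 0 ≤ C)
    (G : Freq d × Freq d → ℂ) (Gj : Fin K → Freq d × Freq d → ℂ)
    (hGmeas : Measurable G) (hGjmeas : ∀ j, Measurable (Gj j))
    (hdecomp : ∀ z, G z = ∑ j, Gj j z)
    (hschur : ∀ j : Fin K,
      (∀ p : Freq d, ∫⁻ q, (‖Gj j (p, q)‖₊ : ℝ≥0∞) ^ 2 ∂(freqMeasure d) ≤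
          ENNReal.ofReal (C ^ 2)) ∨
      (∀ q : Freq d, ∫⁻ p, (‖Gj j (p, q)‖₊ : ℝ≥0∞) ^ 2 ∂(freqMeasure d) ≤
          ENNReal.ofReal (C ^ 2)))
    (f g : Freq d → ℂ)
    (hf : MemLp f 2 (freqMeasure d)) (hg : MemLp g 2 (freqMeasure d)) :
    MemLp (fun p => ∫ q, G (p, q) * f (p - q) * g q ∂(freqMeasure d)) 2 (freqMeasure d) ∧
    eLpNorm (fun p => ∫ q, G (p, q) * f (p - q) * g q ∂(freqMeasure d)) 2 (freqMeasure d) ≤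
      (K : ℝ≥0∞) * ENNReal.ofReal C * eLpNorm f 2 (freqMeasure d) *
        eLpNorm g 2 (freqMeasure d) := by
  rw [ENNReal.ofReal_pow hC] at hschur
  have hbound : eLpNorm (kernelConv (freqMeasure d) G f g) 2 (freqMeasure d) ≤
      K * ENNReal.ofReal C * eLpNorm f 2 (freqMeasure d) * eLpNorm g 2 (freqMeasure d) := by
    simpa only [Fintype.card_fin] using
      eLpNorm_kernelConv_le hGjmeas hdecomp hschur hf.aestronglyMeasurable hg.aestronglyMeasurable
  have hfinite : (K : ℝ≥0∞) * ENNReal.ofReal C * eLpNorm f 2 (freqMeasure d) *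
      eLpNorm g 2 (freqMeasure d) < ⊤ :=
    ENNReal.mul_lt_top (ENNReal.mul_lt_top (by finiteness) hf.eLpNorm_lt_top) hg.eLpNorm_lt_top
  have hmeas : AEStronglyMeasurable (kernelConv (freqMeasure d) G f g) (freqMeasure d) :=
    hGmeas.aestronglyMeasurable.kernelConv hf.aestronglyMeasurable hg.aestronglyMeasurable
  exact ⟨⟨hmeas, hbound.trans_lt hfinite⟩, hbound⟩

/-- **Schur-type bilinear `L²` boundedness lemma.**  If `G = Σ_{j<K} G_j` where each `G_j`
has square-integral in one of its two variables bounded by `C²` uniformly in the other,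
then `h(ξ,k) = ∫ G(ξ,k,η,l) f(ξ−η,k−l) g(η,l) d(η,l)` defines a continuous bilinear map
`L² × L² → L²` with `‖h‖ ≤ K C ‖f‖_{L²} ‖g‖_{L²}`. -/
theorem schur_bilinear_L2 (d : ℕ) (hd : 2 ≤ d) (K : ℕ) (C : ℝ) (hC : 0 ≤ C)
    (G : Freq d × Freq d → ℂ) (Gj : Fin K → Freq d × Freq d → ℂ)
    (hGmeas : Measurable G) (hGjmeas : ∀ j, Measurable (Gj j))
    (hdecomp : ∀ z, G z = ∑ j, Gj j z)
    (hschur : ∀ j : Fin K,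
      (∀ p : Freq d, ∫⁻ q, (‖Gj j (p, q)‖₊ : ℝ≥0∞) ^ 2 ∂(freqMeasure d) ≤
          ENNReal.ofReal (C ^ 2)) ∨
      (∀ q : Freq d, ∫⁻ p, (‖Gj j (p, q)‖₊ : ℝ≥0∞) ^ 2 ∂(freqMeasure d) ≤
          ENNReal.ofReal (C ^ 2)))
    (f g : Freq d → ℂ)
    (hf : MemLp f 2 (freqMeasure d)) (hg : MemLp g 2 (freqMeasure d)) :
    MemLp (fun p => ∫ q, G (p, q) * f (p - q) * g q ∂(freqMeasure d)) 2 (freqMeasure d) ∧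
    eLpNorm (fun p => ∫ q, G (p, q) * f (p - q) * g q ∂(freqMeasure d)) 2 (freqMeasure d) ≤
      (K : ℝ≥0∞) * ENNReal.ofReal C * eLpNorm f 2 (freqMeasure d) *
        eLpNorm g 2 (freqMeasure d) :=
  schur_bilinear_L2_general d K C hC G Gj hGmeas hGjmeas hdecomp hschur f g hf hg

end
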